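/- Entanglement gain bound for unequal helicity: for all η and all δ, E_ξ(δ) - E_ξ(0) ≥ (1/(2 ln 2))·sin²(2η)·sin²δ, where E_ξ(δ) = H((1+sqrt(cos²(2η)+cos²δ·sin²(2η)))/2). -/
import Mathlib


open Real Set

noncomputable def binEnt (p : ℝ) : ℝ := -(p * Real.logb 2 p) - (1 - p) * Real.logb 2 (1 - p)

noncomputable def Exient (η δ : ℝ) : ℝ :=
  binEnt ((1 + Real.sqrt (Real.cos (2*η)^2 + Real.cos δ ^2 * Real.sin (2*η)^2)) / 2)

lemma aux_mul_log (x : ℝ) (hx : 0 ≤ x) (hx1 : x ≤ 1) : x * (1 - x) ≤ -(x * Real.log x) := by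
  rcases eq_or_lt_of_le hx with h | h
  · simp [← h]
  · nlinarith [Real.log_le_sub_one_of_pos h]

lemma binEnt_ge (p : ℝ) (h0 : 0 ≤ p) (h1 : p ≤ 1) :
    2 * (p * (1 - p)) / Real.log 2 ≤ binEnt p := by
  have h2 : (0:ℝ) < Real.log 2 := Real.log_pos (by norm_num)
  have ha := aux_mul_log p h0 h1
  have hb := aux_mul_log (1 - p) (by linarith) (by linarith)
  have key : 2 * (p * (1 - p)) ≤ -(p * Real.log p) - (1 - p) * Real.log (1 - p) := by
    nlinarith
  have : binEnt p = (-(p * Real.log p) - (1 - p) * Real.log (1 - p)) / Real.log 2 := by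
    unfold binEnt
    rw [Real.logb, Real.logb]
    field_simp
  rw [this]
  gcongr
  
theorem stmt_12 (η δ : ℝ) :
    Exient η δ - Exient η 0 ≥ Real.sin (2*η)^2 * Real.sin δ ^2 / (2 * Real.log 2) := by
  have hpyth : Real.sin (2*η)^2 + Real.cos (2*η)^2 = 1 := Real.sin_sq_add_cos_sq _
  have hpythd : Real.sin δ^2 + Real.cos δ^2 = 1 := Real.sin_sq_add_cos_sq _
  set t : ℝ := Real.cos (2*η)^2 + Real.cos δ ^2 * Real.sin (2*η)^2 with ht
  have ht0 : 0 ≤ t := by positivity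
  have ht1 : t ≤ 1 := by nlinarith [sq_nonneg (Real.sin (2*η)), sq_nonneg (Real.sin δ)]
  have hE0 : Exient η 0 = 0 := by
    unfold Exient
    have : Real.cos (2*η)^2 + Real.cos (0:ℝ) ^2 * Real.sin (2*η)^2 = 1 := by
      rw [Real.cos_zero]; nlinarith
    rw [this, Real.sqrt_one]
    norm_num [binEnt]
  set p : ℝ := (1 + Real.sqrt t) / 2 with hp
  have hs0 : 0 ≤ Real.sqrt t := Real.sqrt_nonneg t
  have hs1 : Real.sqrt t ≤ 1 := Real.sqrt_le_one.mpr ht1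
  have hsq : Real.sqrt t ^ 2 = t := Real.sq_sqrt ht0
  have hp0 : 0 ≤ p := by rw [hp]; linarith
  have hp1 : p ≤ 1 := by rw [hp]; linarith
  have hpp : p * (1 - p) = (1 - t) / 4 := by rw [hp]; nlinarith
  have hrhs : Real.sin (2*η)^2 * Real.sin δ ^2 = 1 - t := by nlinarith
  have hb := binEnt_ge p hp0 hp1
  have hEd : Exient η δ = binEnt p := rfl
  rw [hE0, hEd, hrhs, hpp] at *
  have h2 : (0:ℝ) < Real.log 2 := Real.log_pos (by norm_num)
  have : (1 - t) / (2 * Real.log 2) = 2 * ((1 - t) / 4) / Real.log 2 := by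
    field_simp; ring
  rw [this]
  linarith
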